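/- arXiv:2211.00079 — 2 statements merged into one kernel-verified Lean document; each statement's English description precedes it below -/
import Mathlib

section
/- Under the hypotheses of the previous setup (A, H, x_H differentiable with z^α ∂_{x^i}A_α(x_H(z)) + ∂_{x^i}H(x_H(z)) = 0 for all z), if z₀ is a critical point of S_H(z) = z^α A_α(x_H(z)) + H(x_H(z)), then x_H(z₀) is a solution of the system A(x) = 0. -/
/-!
By the chain rule, the derivative of `S(z) = ⟪z, A (x z)⟫ + H (x z)` at `z₀` in a direction `w`
is `⟪w, A (x z₀)⟫ + (⟪z₀, dA (dx w)⟫ + dH (dx w))`, and the bracket vanishes by stationarity.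
Hence `dS(z₀) = ⟪A (x z₀), ·⟫`, which is zero only if `A (x z₀) = 0`.
-/

open scoped RealInnerProductSpace

section Stationary

variable {E F : Type*} [NormedAddCommGroup E] [NormedSpace ℝ E]
  [NormedAddCommGroup F] [InnerProductSpace ℝ F]
  {A : E → F} {H : E → ℝ} {x : F → E} {z₀ : F}

theorem hasFDerivAt_inner_add_of_stationary (hA : DifferentiableAt ℝ A (x z₀))
    (hH : DifferentiableAt ℝ H (x z₀)) (hx : DifferentiableAt ℝ x z₀)
    (hstat : ∀ v, ⟪z₀, fderiv ℝ A (x z₀) v⟫ + fderiv ℝ H (x z₀) v = 0) :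
    HasFDerivAt (fun z => ⟪z, A (x z)⟫ + H (x z)) (innerSL ℝ (A (x z₀))) z₀ := by
  have hAx : HasFDerivAt (fun z => A (x z)) ((fderiv ℝ A (x z₀)).comp (fderiv ℝ x z₀)) z₀ :=
    hA.hasFDerivAt.comp z₀ hx.hasFDerivAt
  have hHx : HasFDerivAt (fun z => H (x z)) ((fderiv ℝ H (x z₀)).comp (fderiv ℝ x z₀)) z₀ :=
    hH.hasFDerivAt.comp z₀ hx.hasFDerivAt
  refine ((hasFDerivAt_id z₀).inner ℝ hAx |>.add hHx).congr_fderiv ?_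
  ext w
  have hw := hstat (fderiv ℝ x z₀ w)
  simp only [add_apply, ContinuousLinearMap.comp_apply,
    ContinuousLinearMap.prod_apply, fderivInnerCLM_apply, ContinuousLinearMap.id_apply,
    innerSL_apply_apply, id]
  rw [real_inner_comm w]
  linarith

theorem eq_zero_of_fderiv_inner_add_eq_zero (hA : DifferentiableAt ℝ A (x z₀))
    (hH : DifferentiableAt ℝ H (x z₀)) (hx : DifferentiableAt ℝ x z₀)
    (hstat : ∀ v, ⟪z₀, fderiv ℝ A (x z₀) v⟫ + fderiv ℝ H (x z₀) v = 0)
    (hcrit : fderiv ℝ (fun z => ⟪z, A (x z)⟫ + H (x z)) z₀ = 0) :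
    A (x z₀) = 0 := by
  have hinner : innerSL ℝ (A (x z₀)) = 0 :=
    (hasFDerivAt_inner_add_of_stationary hA hH hx hstat).fderiv.symm.trans hcrit
  simpa using congr($hinner (A (x z₀)))

end Stationary

theorem EuclideanSpace.sum_mul_eq_real_inner {ι : Type*} [Fintype ι] (x y : EuclideanSpace ℝ ι) :
    ∑ i, x i * y i = ⟪x, y⟫ := by
  simp [PiLp.inner_apply, mul_comm]

theorem stmt1 (n N : ℕ)
    (A : EuclideanSpace ℝ (Fin n) → EuclideanSpace ℝ (Fin N))
    (H : EuclideanSpace ℝ (Fin n) → ℝ)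
    (xH : EuclideanSpace ℝ (Fin N) → EuclideanSpace ℝ (Fin n))
    (hA : Differentiable ℝ A) (hH : Differentiable ℝ H)
    (hxH : Differentiable ℝ xH)
    (hstat : ∀ z v, (∑ α, z α * fderiv ℝ A (xH z) v α) + fderiv ℝ H (xH z) v = 0)
    (z₀ : EuclideanSpace ℝ (Fin N))
    (hcrit : fderiv ℝ (fun z => (∑ α, z α * A (xH z) α) + H (xH z)) z₀ = 0) :
    A (xH z₀) = 0 := by
  simp only [EuclideanSpace.sum_mul_eq_real_inner] at hstat hcrit
  exact eq_zero_of_fderiv_inner_add_eq_zero (hA _) (hH _) (hxH _) (hstat z₀) hcrit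
end

section
/- Suppose the system A(x) = 0 has a unique solution y ∈ ℝⁿ. Then for any admissible potential H (i.e., any differentiable H for which a differentiable map x_H exists satisfying the stationarity identity), and any critical point z₀ of the associated dual objective S_H, one has x_H(z₀) = y. -/
/-!
Differentiating `S_H(z) = ⟪z, A (x_H z)⟫ + H (x_H z)` in a direction `w` produces
`⟪w, A (x_H z)⟫` plus the terms `⟪z, DA (Dx_H w)⟫ + DH (Dx_H w)`, which the stationarity identity
for `x_H` (applied to `v = Dx_H w`) cancels. Hence `DS_H(z) = ⟪A (x_H z), ·⟫`, so at a critical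
point `A (x_H z₀) = 0`, and uniqueness of the solution gives `x_H z₀ = y`.
-/

open RealInnerProductSpace

section DualObjective

variable {E F : Type*} [NormedAddCommGroup E] [NormedSpace ℝ E]
  [NormedAddCommGroup F] [InnerProductSpace ℝ F]

def dualObjective (A : E → F) (H : E → ℝ) (x : F → E) (z : F) : ℝ :=
  ⟪z, A (x z)⟫ + H (x z)

variable {A : E → F} {H : E → ℝ} {x : F → E} {z₀ : F}

theorem hasFDerivAt_dualObjective (hA : DifferentiableAt ℝ A (x z₀))
    (hH : DifferentiableAt ℝ H (x z₀)) (hx : DifferentiableAt ℝ x z₀)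
    (hstat : ∀ v, ⟪z₀, fderiv ℝ A (x z₀) v⟫ + fderiv ℝ H (x z₀) v = 0) :
    HasFDerivAt (dualObjective A H x) (innerSL ℝ (A (x z₀))) z₀ := by
  have hchain := ((hasFDerivAt_id z₀).inner ℝ (hA.hasFDerivAt.comp z₀ hx.hasFDerivAt)).add
    (hH.hasFDerivAt.comp z₀ hx.hasFDerivAt)
  refine hchain.congr_fderiv (ContinuousLinearMap.ext fun w => ?_)
  have hw := hstat (fderiv ℝ x z₀ w)
  simp only [innerSL_apply_apply, add_apply, Function.comp_apply, ContinuousLinearMap.comp_apply,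
    fderivInnerCLM_apply, ContinuousLinearMap.prod_apply, id_eq,
    ContinuousLinearMap.coe_id', real_inner_comm (A (x z₀)) w]
  linarith

theorem apply_eq_zero_of_fderiv_dualObjective_eq_zero (hA : DifferentiableAt ℝ A (x z₀))
    (hH : DifferentiableAt ℝ H (x z₀)) (hx : DifferentiableAt ℝ x z₀)
    (hstat : ∀ v, ⟪z₀, fderiv ℝ A (x z₀) v⟫ + fderiv ℝ H (x z₀) v = 0)
    (hcrit : fderiv ℝ (dualObjective A H x) z₀ = 0) :
    A (x z₀) = 0 := by
  rw [(hasFDerivAt_dualObjective hA hH hx hstat).fderiv] at hcrit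
  simpa [innerSL_apply_norm] using congrArg (‖·‖) hcrit

end DualObjective

theorem EuclideanSpace.sum_mul_eq_inner {N : ℕ} (z w : EuclideanSpace ℝ (Fin N)) :
    ∑ α, z α * w α = ⟪z, w⟫ := by
  simp [PiLp.inner_apply, mul_comm]

theorem stmt2_general (n N : ℕ)
    (A : EuclideanSpace ℝ (Fin n) → EuclideanSpace ℝ (Fin N))
    (hA : Differentiable ℝ A)
    (y : EuclideanSpace ℝ (Fin n))
    (huniq : ∀ x, A x = 0 → x = y) :
    ∀ (H : EuclideanSpace ℝ (Fin n) → ℝ)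
      (xH : EuclideanSpace ℝ (Fin N) → EuclideanSpace ℝ (Fin n)),
      Differentiable ℝ H → Differentiable ℝ xH →
      (∀ z v, (∑ α, z α * fderiv ℝ A (xH z) v α) + fderiv ℝ H (xH z) v = 0) →
      ∀ z₀ : EuclideanSpace ℝ (Fin N),
        fderiv ℝ (fun z => (∑ α, z α * A (xH z) α) + H (xH z)) z₀ = 0 →
        xH z₀ = y := by
  intro H xH hH hxH hstat z₀ hcrit
  simp_rw [EuclideanSpace.sum_mul_eq_inner] at hstat hcrit
  exact huniq _
    (apply_eq_zero_of_fderiv_dualObjective_eq_zero (hA _) (hH _) (hxH _) (hstat z₀) hcrit)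

theorem stmt2 (n N : ℕ)
    (A : EuclideanSpace ℝ (Fin n) → EuclideanSpace ℝ (Fin N))
    (hA : Differentiable ℝ A)
    (y : EuclideanSpace ℝ (Fin n))
    (hy : A y = 0) (huniq : ∀ x, A x = 0 → x = y) :
    ∀ (H : EuclideanSpace ℝ (Fin n) → ℝ)
      (xH : EuclideanSpace ℝ (Fin N) → EuclideanSpace ℝ (Fin n)),
      Differentiable ℝ H → Differentiable ℝ xH →
      (∀ z v, (∑ α, z α * fderiv ℝ A (xH z) v α) + fderiv ℝ H (xH z) v = 0) →
      ∀ z₀ : EuclideanSpace ℝ (Fin N),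
        fderiv ℝ (fun z => (∑ α, z α * A (xH z) α) + H (xH z)) z₀ = 0 →
        xH z₀ = y :=
  stmt2_general n N A hA y huniq
end
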